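/- arXiv:2107.02850 — 5 statements merged into one kernel-verified Lean document; each statement's English description precedes it below -/
import Mathlib

section
/- Let 𝔅 be the collection of nonempty compact convex subsets S of ℝ² that are comprehensive relative to 0 (whenever y ∈ S and 0 ≤ x ≤ y componentwise, then x ∈ S) and contain a point with both coordinates strictly positive. A solution is a function F : 𝔅 → ℝ² with F(S) ∈ S for all S ∈ 𝔅. Then F satisfies (i) weak Pareto optimality: for all S ∈ 𝔅 there is no y ∈ S with y₁ > F(S)₁ and y₂ > F(S)₂; (ii) symmetry: if S ∈ 𝔅 is invariant under the coordinate swap (x₁,x₂) ↦ (x₂,x₁), then F(S)₁ = F(S)₂; and (iii) strong monotonicity: for all S, S' ∈ 𝔅 with S ⊆ S', F(S) ≤ F(S') componentwise — if and only if F is the egalitarian solution, i.e., F(S) = (a_S, a_S) with a_S = max{t ∈ ℝ : (t,t) ∈ S} for every S ∈ 𝔅. -/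
/-!
Symmetry and weak Pareto optimality force `F` to choose `(c, c)` on every square `[0, c]²`,
so by monotonicity `F S ≥ (a_S, a_S)`. For the reverse inequality, enlarge `S` to the
comprehensive convex hull `T` of `S ∪ {(b, b)}` with `b > a_S`. Every point of `S` has a
coordinate at most `a_S`, so `(b, b)` is the only point of `T` dominating `(b, b)`; hence
`F T = (b, b)`, and monotonicity gives `F S ≤ (b, b)` for all `b > a_S`.
-/

/-- `S` is comprehensive relative to the disagreement point `0`. -/
def Comprehensive (S : Set (ℝ × ℝ)) : Prop :=
  ∀ y ∈ S, ∀ x : ℝ × ℝ, 0 ≤ x.1 → 0 ≤ x.2 → x.1 ≤ y.1 → x.2 ≤ y.2 → x ∈ S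

/-- A two-player bargaining problem with disagreement point `0`: nonempty, compact,
convex, comprehensive, and containing a strictly positive point. -/
def BargainingSet (S : Set (ℝ × ℝ)) : Prop :=
  S.Nonempty ∧ IsCompact S ∧ Convex ℝ S ∧ Comprehensive S ∧ ∃ p ∈ S, 0 < p.1 ∧ 0 < p.2

open Set Pointwise

theorem isCompact_convexJoin {E : Type*} [AddCommGroup E] [Module ℝ E] [TopologicalSpace E]
    [IsTopologicalAddGroup E] [ContinuousSMul ℝ E] {s t : Set E} (hs : IsCompact s)
    (ht : IsCompact t) : IsCompact (convexJoin ℝ s t) := by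
  have : convexJoin ℝ s t =
      (fun q : E × E × ℝ => (1 - q.2.2) • q.1 + q.2.2 • q.2.1) '' (s ×ˢ t ×ˢ Icc 0 1) := by
    ext x
    simp only [mem_convexJoin, segment_eq_image]
    constructor
    · rintro ⟨a, ha, b, hb, θ, hθ, rfl⟩
      exact ⟨(a, b, θ), ⟨ha, hb, hθ⟩, rfl⟩
    · rintro ⟨⟨a, b, θ⟩, ⟨ha, hb, hθ⟩, rfl⟩
      exact ⟨a, ha, b, hb, θ, hθ, rfl⟩
  rw [this]
  exact (hs.prod (ht.prod isCompact_Icc)).image (by fun_prop)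

theorem Comprehensive.Icc_zero_subset {S : Set (ℝ × ℝ)} (hS : Comprehensive S) {y : ℝ × ℝ}
    (hy : y ∈ S) : Icc 0 y ⊆ S :=
  fun x hx => hS y hy x hx.1.1 hx.1.2 hx.2.1 hx.2.2

theorem Comprehensive.min_mem {S : Set (ℝ × ℝ)} (hS : Comprehensive S) {y : ℝ × ℝ} (hy : y ∈ S)
    (h1 : 0 ≤ y.1) (h2 : 0 ≤ y.2) : (min y.1 y.2, min y.1 y.2) ∈ S :=
  hS y hy _ (le_min h1 h2) (le_min h1 h2) (min_le_left _ _) (min_le_right _ _)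

theorem bargainingSet_Icc_zero {c : ℝ} (hc : 0 < c) : BargainingSet (Icc 0 (c, c)) :=
  ⟨nonempty_Icc.2 ⟨hc.le, hc.le⟩, isCompact_Icc, convex_Icc _ _,
    fun _ hy _ hx1 hx2 hxy1 hxy2 => ⟨⟨hx1, hx2⟩, hxy1.trans hy.2.1, hxy2.trans hy.2.2⟩,
    (c, c), right_mem_Icc.2 ⟨hc.le, hc.le⟩, hc, hc⟩

namespace BargainingSet

variable {S : Set (ℝ × ℝ)} {a : ℝ}

theorem exists_isGreatest_diag (hS : BargainingSet S) :
    ∃ a, IsGreatest {t : ℝ | ((t, t) : ℝ × ℝ) ∈ S} a := by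
  obtain ⟨-, hcpt, -, hcomp, p, hp, hp1, hp2⟩ := hS
  have hdiag : Isometry (fun t : ℝ => (t, t)) :=
    Isometry.of_dist_eq fun x y => by simp [Prod.dist_eq]
  exact (hdiag.isClosedEmbedding.isCompact_preimage hcpt).exists_isGreatest
    ⟨0, hcomp p hp 0 le_rfl le_rfl hp1.le hp2.le⟩

theorem pos_of_isGreatest_diag (hS : BargainingSet S)
    (ha : IsGreatest {t : ℝ | ((t, t) : ℝ × ℝ) ∈ S} a) : 0 < a := by
  obtain ⟨-, -, -, hcomp, p, hp, hp1, hp2⟩ := hS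
  exact (lt_min hp1 hp2).trans_le (ha.2 (hcomp.min_mem hp hp1.le hp2.le))

theorem fst_le_or_snd_le (hS : BargainingSet S)
    (ha : IsGreatest {t : ℝ | ((t, t) : ℝ × ℝ) ∈ S} a) {y : ℝ × ℝ} (hy : y ∈ S) :
    y.1 ≤ a ∨ y.2 ≤ a := by
  by_contra! h
  have ha0 := hS.pos_of_isGreatest_diag ha
  obtain ⟨-, -, -, hcomp, -⟩ := hS
  exact (lt_min h.1 h.2).not_ge
    (ha.2 (hcomp.min_mem hy (ha0.le.trans h.1.le) (ha0.le.trans h.2.le)))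

end BargainingSet

/-- The comprehensive convex hull of `S ∪ {(b, b)}`, cut off below at `m` to keep it compact. -/
def diagExtension (S : Set (ℝ × ℝ)) (m : ℝ × ℝ) (b : ℝ) : Set (ℝ × ℝ) :=
  Ici m ∩ (convexJoin ℝ S {(b, b)} + Iic 0)

section diagExtension

variable {S : Set (ℝ × ℝ)} {m : ℝ × ℝ} {b : ℝ}

theorem subset_diagExtension (hm : m ∈ lowerBounds S) : S ⊆ diagExtension S m b :=
  fun s hs => ⟨hm hs, s, subset_convexJoin_left (singleton_nonempty _) hs, 0, mem_Iic.2 le_rfl,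
    add_zero s⟩

theorem diag_mem_diagExtension (hS : S.Nonempty) (hm : m ≤ 0) (hb : 0 ≤ b) :
    (b, b) ∈ diagExtension S m b :=
  ⟨hm.trans ⟨hb, hb⟩, (b, b), subset_convexJoin_right hS rfl, 0, mem_Iic.2 le_rfl, add_zero _⟩

theorem bargainingSet_diagExtension (hS : BargainingSet S) (hm : m ∈ lowerBounds S)
    (hm0 : m ≤ 0) : BargainingSet (diagExtension S m b) := by
  obtain ⟨hne, hcpt, hconv, -, p, hp, hp1, hp2⟩ := hS
  have hK : IsCompact (convexJoin ℝ S {(b, b)}) := isCompact_convexJoin hcpt isCompact_singleton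
  obtain ⟨M, hM⟩ := hK.isBounded.bddAbove
  have hbdd : diagExtension S m b ⊆ Icc m M := by
    rintro _ ⟨hmy, k, hk, d, hd, rfl⟩
    exact ⟨hmy, (add_le_of_nonpos_right hd).trans (hM hk)⟩
  refine ⟨hne.mono (subset_diagExtension hm), ?_, ?_, ?_, p, subset_diagExtension hm hp, hp1, hp2⟩
  · exact isCompact_Icc.of_isClosed_subset
      (isClosed_Ici.inter (isClosed_Iic.add_left_of_isCompact hK)) hbdd
  · exact (convex_Ici m).inter ((hconv.convexJoin (convex_singleton _)).add (convex_Iic 0))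
  · rintro _ ⟨-, k, hk, d, hd, rfl⟩ x hx1 hx2 hxy1 hxy2
    have hxk : x ≤ k := (show x ≤ k + d from ⟨hxy1, hxy2⟩).trans (add_le_of_nonpos_right hd)
    exact ⟨hm0.trans ⟨hx1, hx2⟩, k, hk, x - k, sub_nonpos.2 hxk, add_sub_cancel k x⟩

theorem le_of_mem_diagExtension {a : ℝ} (hSa : ∀ s ∈ S, s.1 ≤ a ∨ s.2 ≤ a) (hab : a < b)
    {y : ℝ × ℝ} (hy : y ∈ diagExtension S m b) (hby : (b, b) ≤ y) : y ≤ (b, b) := by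
  obtain ⟨-, k, hk, d, hd, rfl⟩ := hy
  obtain ⟨s, hs, _, rfl, α, β, hα, hβ, hαβ, rfl⟩ := mem_convexJoin.1 hk
  have hbk : (b, b) ≤ α • s + β • (b, b) := hby.trans (add_le_of_nonpos_right hd)
  obtain rfl : β = 1 - α := by linarith
  have hα0 : α = 0 := by
    have of_le : ∀ t ≤ a, b ≤ α * t + (1 - α) * b → α = 0 := fun t ht h => by
      by_contra hα0
      nlinarith [mul_pos (hα.lt_of_ne' hα0) (sub_pos.2 (ht.trans_lt hab))]
    rcases hSa s hs with h | h
    · exact of_le _ h hbk.1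
    · exact of_le _ h hbk.2
  simpa [hα0] using add_le_of_nonpos_right hd (a := α • s + (1 - α) • (b, b))

end diagExtension

namespace BargainingSolution

variable (F : Set (ℝ × ℝ) → ℝ × ℝ)

def IsWeaklyParetoOptimal : Prop :=
  ∀ S, BargainingSet S → ¬ ∃ y ∈ S, (F S).1 < y.1 ∧ (F S).2 < y.2

def IsSymmetric : Prop :=
  ∀ S, BargainingSet S → (fun x : ℝ × ℝ => (x.2, x.1)) '' S = S → (F S).1 = (F S).2

def IsStronglyMonotone : Prop :=
  ∀ S S', BargainingSet S → BargainingSet S' → S ⊆ S' → F S ≤ F S'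

variable {F} {S : Set (ℝ × ℝ)}

theorem diag_le_of_mem (hW : IsWeaklyParetoOptimal F) (hSym : IsSymmetric F)
    (hMon : IsStronglyMonotone F) (hS : BargainingSet S) {c : ℝ} (hc : 0 < c)
    (hcS : (c, c) ∈ S) : (c, c) ≤ F S := by
  have hB := bargainingSet_Icc_zero hc
  have hswap : (fun x : ℝ × ℝ => (x.2, x.1)) '' Icc 0 (c, c) = Icc 0 (c, c) := by
    ext ⟨x, y⟩
    simp only [mem_image, mem_Icc, Prod.le_def, Prod.fst_zero, Prod.snd_zero, Prod.mk.injEq,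
      Prod.exists, existsAndEq, true_and, exists_eq_right]
    tauto
  have hdiag : (F (Icc 0 (c, c))).1 = (F (Icc 0 (c, c))).2 := hSym _ hB hswap
  have hc_le : c ≤ (F (Icc 0 (c, c))).1 := not_lt.1 fun h =>
    hW _ hB ⟨(c, c), right_mem_Icc.2 ⟨hc.le, hc.le⟩, h, hdiag ▸ h⟩
  have hmon := hMon _ _ hB hS (Comprehensive.Icc_zero_subset hS.2.2.2.1 hcS)
  exact ⟨hc_le.trans hmon.1, (hdiag ▸ hc_le).trans hmon.2⟩

theorem le_diag_of_isGreatest (hF : ∀ S, BargainingSet S → F S ∈ S)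
    (hW : IsWeaklyParetoOptimal F) (hSym : IsSymmetric F) (hMon : IsStronglyMonotone F)
    (hS : BargainingSet S) {a : ℝ} (ha : IsGreatest {t : ℝ | ((t, t) : ℝ × ℝ) ∈ S} a) :
    F S ≤ (a, a) := by
  have ha0 := hS.pos_of_isGreatest_diag ha
  obtain ⟨m, hm, hm0⟩ : ∃ m ∈ lowerBounds S, m ≤ 0 := by
    obtain ⟨m, hm⟩ := hS.2.1.isBounded.bddBelow
    exact ⟨m ⊓ 0, fun s hs => inf_le_left.trans (hm hs), inf_le_right⟩
  have hle : ∀ b, a < b → F S ≤ (b, b) := fun b hab => by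
    have hT := bargainingSet_diagExtension (b := b) hS hm hm0
    have hbT := diag_mem_diagExtension hS.1 hm0 (ha0.trans hab).le
    calc F S ≤ F (diagExtension S m b) := hMon _ _ hS hT (subset_diagExtension hm)
      _ ≤ (b, b) := le_of_mem_diagExtension (fun _ => hS.fst_le_or_snd_le ha)
        hab (hF _ hT) (diag_le_of_mem hW hSym hMon hT (ha0.trans hab) hbT)
  exact ⟨le_of_forall_gt_imp_ge_of_dense fun b hb => (hle b hb).1,
    le_of_forall_gt_imp_ge_of_dense fun b hb => (hle b hb).2⟩

end BargainingSolution

open BargainingSolution in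
/-- A bargaining solution `F` satisfies weak Pareto optimality, symmetry, and strong
monotonicity if and only if it is the egalitarian solution
`F(S) = (a_S, a_S)` with `a_S = max {t | (t,t) ∈ S}`. -/
theorem egalitarian_characterization
    (F : Set (ℝ × ℝ) → ℝ × ℝ)
    (hF : ∀ S, BargainingSet S → F S ∈ S) :
    ((∀ S, BargainingSet S → ¬ ∃ y ∈ S, (F S).1 < y.1 ∧ (F S).2 < y.2) ∧
     (∀ S, BargainingSet S →
        (fun x : ℝ × ℝ => (x.2, x.1)) '' S = S → (F S).1 = (F S).2) ∧
     (∀ S S', BargainingSet S → BargainingSet S' → S ⊆ S' →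
        (F S).1 ≤ (F S').1 ∧ (F S).2 ≤ (F S').2))
    ↔
    (∀ S, BargainingSet S →
      ∃ a : ℝ, IsGreatest {t : ℝ | ((t, t) : ℝ × ℝ) ∈ S} a ∧ F S = (a, a)) := by
  constructor
  · rintro ⟨hW, hSym, hMon⟩ S hS
    obtain ⟨a, ha⟩ := hS.exists_isGreatest_diag
    exact ⟨a, ha, le_antisymm (le_diag_of_isGreatest hF hW hSym hMon hS ha)
      (diag_le_of_mem hW hSym hMon hS (hS.pos_of_isGreatest_diag ha) ha.1)⟩
  · intro hE
    refine ⟨fun S hS ⟨y, hy, hy1, hy2⟩ => ?_, fun S hS _ => ?_, fun S S' hS hS' hSS' => ?_⟩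
    · obtain ⟨a, ha, hFa⟩ := hE S hS
      rw [hFa] at hy1 hy2
      exact (hS.fst_le_or_snd_le ha hy).elim hy1.not_ge hy2.not_ge
    · obtain ⟨a, -, hFa⟩ := hE S hS
      rw [hFa]
    · obtain ⟨a, ha, hFa⟩ := hE S hS
      obtain ⟨a', ha', hFa'⟩ := hE S' hS'
      rw [hFa, hFa']
      exact ⟨ha'.2 (hSS' ha.1), ha'.2 (hSS' ha.1)⟩
end

section
/- Define the order ≥_ℓ on ℝ² by: x ≥_ℓ y iff either min(x₁,x₂) > min(y₁,y₂), or min(x₁,x₂) = min(y₁,y₂) and max(x₁,x₂) ≥ max(y₁,y₂). For every nonempty compact convex subset S of ℝ², there exists exactly one point x* ∈ S such that x* ≥_ℓ y for every y ∈ S (existence and uniqueness of the egalitarian bargaining solution point). -/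
/-- The lexicographic egalitarian order on `ℝ²`: `x ≥_ℓ y` iff
`min(x₁,x₂) > min(y₁,y₂)`, or `min(x₁,x₂) = min(y₁,y₂)` and `max(x₁,x₂) ≥ max(y₁,y₂)`. -/
def LexGE (x y : ℝ × ℝ) : Prop :=
  min x.1 x.2 > min y.1 y.2 ∨
    (min x.1 x.2 = min y.1 y.2 ∧ max x.1 x.2 ≥ max y.1 y.2)

lemma mid_contra (S : Set (ℝ × ℝ)) (hconv : Convex ℝ S) (xs y : ℝ × ℝ)
    (hxs : xs ∈ S) (hy : y ∈ S) (h1 : y.1 = xs.2) (h2 : y.2 = xs.1)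
    (hne : xs.1 ≠ xs.2) (hmax : ∀ z ∈ S, LexGE xs z) : False := by
  have hz : ((1:ℝ)/2) • y + ((1:ℝ)/2) • xs ∈ S :=
    hconv hy hxs (by norm_num) (by norm_num) (by norm_num)
  have hkey := hmax _ hz
  have hz1 : (((1:ℝ)/2) • y + ((1:ℝ)/2) • xs).1 = (xs.1 + xs.2)/2 := by
    simp [Prod.fst_add, Prod.smul_fst, smul_eq_mul, h1]; ring
  have hz2 : (((1:ℝ)/2) • y + ((1:ℝ)/2) • xs).2 = (xs.1 + xs.2)/2 := by
    simp [Prod.snd_add, Prod.smul_snd, smul_eq_mul, h2]; ring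
  have hlt : min xs.1 xs.2 < (xs.1 + xs.2)/2 := by
    rcases lt_or_gt_of_ne hne with hlt | hlt
    · rw [min_eq_left hlt.le]; linarith
    · rw [min_eq_right hlt.le]; linarith
  rw [LexGE, hz1, hz2, min_self] at hkey
  rcases hkey with h | ⟨h, _⟩ <;> linarith

/-- Existence and uniqueness of the egalitarian bargaining solution point: every
nonempty compact convex `S ⊆ ℝ²` has exactly one point `x*` with `x* ≥_ℓ y` for all `y ∈ S`. -/
theorem ebs_exists_unique (S : Set (ℝ × ℝ))
    (hne : S.Nonempty) (hcomp : IsCompact S) (hconv : Convex ℝ S) :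
    ∃! xstar : ℝ × ℝ, xstar ∈ S ∧ ∀ y ∈ S, LexGE xstar y := by
  have hcont1 : Continuous (fun x : ℝ × ℝ => min x.1 x.2) :=
    continuous_fst.min continuous_snd
  have hcont2 : Continuous (fun x : ℝ × ℝ => max x.1 x.2) :=
    continuous_fst.max continuous_snd
  obtain ⟨x₀, hx₀S, hx₀max⟩ := hcomp.exists_isMaxOn hne hcont1.continuousOn
  set m := min x₀.1 x₀.2 with hm
  have hTcomp : IsCompact (S ∩ {x : ℝ × ℝ | min x.1 x.2 = m}) :=
    hcomp.inter_right (isClosed_eq hcont1 continuous_const)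
  obtain ⟨xs, hxsT, hxsmax⟩ :=
    hTcomp.exists_isMaxOn ⟨x₀, hx₀S, rfl⟩ hcont2.continuousOn
  have hx_ge : ∀ y ∈ S, LexGE xs y := by
    intro y hy
    have hymin : min y.1 y.2 ≤ m := hx₀max hy
    rcases lt_or_eq_of_le hymin with h | h
    · left; rw [hxsT.2]; exact h
    · right
      exact ⟨by rw [hxsT.2, h], hxsmax ⟨hy, h⟩⟩
  refine ⟨xs, ⟨hxsT.1, hx_ge⟩, ?_⟩
  rintro y ⟨hyS, hy_ge⟩
  have h1 := hy_ge xs hxsT.1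
  have h2 := hx_ge y hyS
  have key : min y.1 y.2 = min xs.1 xs.2 ∧ max y.1 y.2 = max xs.1 xs.2 := by
    rcases h1 with h | ⟨h, hM⟩ <;> rcases h2 with h' | ⟨h', hM'⟩ <;>
      constructor <;> linarith
  by_contra hne'
  rcases le_total y.1 y.2 with hy12 | hy12 <;> rcases le_total xs.1 xs.2 with hx12 | hx12
  · rw [min_eq_left hy12, min_eq_left hx12, max_eq_right hy12, max_eq_right hx12] at key
    exact hne' (Prod.ext key.1 key.2)
  · rw [min_eq_left hy12, min_eq_right hx12, max_eq_right hy12, max_eq_left hx12] at key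
    refine mid_contra S hconv xs y hxsT.1 hyS key.1 key.2 (fun h => hne' ?_) hx_ge
    exact Prod.ext (key.1.trans h.symm) (key.2.trans h)
  · rw [min_eq_right hy12, min_eq_left hx12, max_eq_left hy12, max_eq_right hx12] at key
    refine mid_contra S hconv xs y hxsT.1 hyS key.2 key.1 (fun h => hne' ?_) hx_ge
    exact Prod.ext (key.2.trans h.symm) (key.1.trans h)
  · rw [min_eq_right hy12, min_eq_right hx12, max_eq_left hy12, max_eq_left hx12] at key
    exact hne' (Prod.ext key.2 key.1)
end

section
/- Let S ⊆ ℝ² be compact and convex, let d ∈ ℝ², and suppose there exists z ∈ S with z₁ > d₁ and z₂ > d₂. Then the Nash product N(x) = (x₁ − d₁)(x₂ − d₂) attains its maximum over S_d = {x ∈ S : x₁ ≥ d₁, x₂ ≥ d₂} at exactly one point (existence and uniqueness of the Nash bargaining solution). -/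
/-- Existence and uniqueness of the Nash bargaining solution: if compact convex `S`
contains a point strictly dominating the disagreement point `d`, then the Nash
product `(x₁ − d₁)(x₂ − d₂)` attains its maximum over
`S_d = {x ∈ S | x ≥ d componentwise}` at exactly one point. -/
theorem nash_bargaining_exists_unique (S : Set (ℝ × ℝ)) (d : ℝ × ℝ)
    (hcomp : IsCompact S) (hconv : Convex ℝ S)
    (hz : ∃ z ∈ S, d.1 < z.1 ∧ d.2 < z.2) :
    ∃! xstar : ℝ × ℝ, xstar ∈ {x ∈ S | d.1 ≤ x.1 ∧ d.2 ≤ x.2} ∧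
      ∀ y ∈ {x ∈ S | d.1 ≤ x.1 ∧ d.2 ≤ x.2},
        (y.1 - d.1) * (y.2 - d.2) ≤ (xstar.1 - d.1) * (xstar.2 - d.2) := by
  obtain ⟨z, hzS, hz1, hz2⟩ := hz
  set T : Set (ℝ × ℝ) := {x ∈ S | d.1 ≤ x.1 ∧ d.2 ≤ x.2} with hT
  have hTclosed : IsClosed {x : ℝ × ℝ | d.1 ≤ x.1 ∧ d.2 ≤ x.2} :=
    (isClosed_le continuous_const continuous_fst).inter
      (isClosed_le continuous_const continuous_snd)
  have hTcomp : IsCompact T := hcomp.inter_right hTclosed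
  have hTne : T.Nonempty := ⟨z, hzS, hz1.le, hz2.le⟩
  have hcont : ContinuousOn (fun x : ℝ × ℝ => (x.1 - d.1) * (x.2 - d.2)) T :=
    (Continuous.mul (continuous_fst.sub continuous_const)
      (continuous_snd.sub continuous_const)).continuousOn
  obtain ⟨x, hxT, hxmax⟩ := hTcomp.exists_isMaxOn hTne hcont
  have hmax : ∀ y ∈ T, (y.1 - d.1) * (y.2 - d.2) ≤ (x.1 - d.1) * (x.2 - d.2) :=
    fun y hy => hxmax hy
  refine ⟨x, ⟨hxT, hmax⟩, ?_⟩
  rintro y ⟨hyT, hymax⟩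
  -- both are maximizers, so the values agree and are positive
  have hMpos : 0 < (x.1 - d.1) * (x.2 - d.2) := by
    have := hmax z ⟨hzS, hz1.le, hz2.le⟩
    nlinarith [mul_pos (sub_pos.2 hz1) (sub_pos.2 hz2)]
  have hEq : (y.1 - d.1) * (y.2 - d.2) = (x.1 - d.1) * (x.2 - d.2) :=
    le_antisymm (hmax y hyT) (hymax x hxT)
  -- midpoint
  set m : ℝ × ℝ := (1/2 : ℝ) • x + (1/2 : ℝ) • y with hm
  have hmS : m ∈ S := hconv hxT.1 hyT.1 (by norm_num) (by norm_num) (by norm_num)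
  have hm1 : m.1 = (x.1 + y.1) / 2 := by simp [hm, Prod.fst_add]; ring
  have hm2 : m.2 = (x.2 + y.2) / 2 := by simp [hm, Prod.snd_add]; ring
  have hx1 : d.1 ≤ x.1 := hxT.2.1
  have hx2 : d.2 ≤ x.2 := hxT.2.2
  have hy1 : d.1 ≤ y.1 := hyT.2.1
  have hy2 : d.2 ≤ y.2 := hyT.2.2
  have hmT : m ∈ T := ⟨hmS, by rw [hm1]; linarith, by rw [hm2]; linarith⟩
  have hmle := hmax m hmT
  rw [hm1, hm2] at hmle
  -- positivity of components
  have hx1p : 0 < x.1 - d.1 := by nlinarith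
  have hx2p : 0 < x.2 - d.2 := by nlinarith
  have hy1p : 0 < y.1 - d.1 := by nlinarith
  have hy2p : 0 < y.2 - d.2 := by nlinarith
  -- key: (a1 - b1)(a2 - b2) ≥ 0 from midpoint inequality
  have hkey : 0 ≤ (y.1 - x.1) * (y.2 - x.2) := by nlinarith
  have h1 : y.1 = x.1 := by
    by_contra hne
    rcases lt_or_gt_of_ne hne with h | h
    · have hb : y.2 ≤ x.2 := by nlinarith
      nlinarith [mul_lt_mul_of_pos_right h hy2p, mul_le_mul_of_nonneg_left hb hx1p.le]
    · have hb : x.2 ≤ y.2 := by nlinarith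
      nlinarith [mul_lt_mul_of_pos_right h hx2p, mul_le_mul_of_nonneg_left hb hy1p.le]
  have h2 : y.2 = x.2 := by
    have := hEq
    rw [h1] at this
    have : (x.1 - d.1) * (y.2 - d.2) = (x.1 - d.1) * (x.2 - d.2) := this
    nlinarith
  exact Prod.ext h1 h2
end

section
/- Let S ⊆ ℝ² be compact, convex, and symmetric (invariant under the coordinate swap (x₁,x₂) ↦ (x₂,x₁)), let d = (c,c) for some c ∈ ℝ, and suppose there exists z ∈ S with z₁ > c and z₂ > c. Then the unique maximizer x* of the Nash product N(x) = (x₁ − c)(x₂ − c) over {x ∈ S : x₁ ≥ c, x₂ ≥ c} satisfies x*₁ = x*₂. -/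
/-- In a symmetric (swap-invariant) compact convex bargaining set with symmetric
disagreement point `d = (c,c)`, the unique maximizer of the Nash product
`(x₁ − c)(x₂ − c)` over `{x ∈ S | x₁ ≥ c, x₂ ≥ c}` gives both players equal rewards. -/
theorem nash_bargaining_symmetric (S : Set (ℝ × ℝ)) (c : ℝ)
    (hcomp : IsCompact S) (hconv : Convex ℝ S)
    (hsym : (fun x : ℝ × ℝ => (x.2, x.1)) '' S = S)
    (hz : ∃ z ∈ S, c < z.1 ∧ c < z.2)
    (xstar : ℝ × ℝ)
    (hmem : xstar ∈ {x ∈ S | c ≤ x.1 ∧ c ≤ x.2})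
    (hmax : ∀ y ∈ {x ∈ S | c ≤ x.1 ∧ c ≤ x.2},
      (y.1 - c) * (y.2 - c) ≤ (xstar.1 - c) * (xstar.2 - c)) :
    xstar.1 = xstar.2 := by
  obtain ⟨hS, h1, h2⟩ := hmem
  -- the swapped point is in S
  have hswap : (xstar.2, xstar.1) ∈ S := by
    rw [← hsym]; exact ⟨xstar, hS, rfl⟩
  -- the midpoint is in S
  have hmid : ((1:ℝ)/2) • xstar + ((1:ℝ)/2) • (xstar.2, xstar.1) ∈ S :=
    hconv hS hswap (by norm_num) (by norm_num) (by norm_num)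
  have hmid' : ((xstar.1 + xstar.2) / 2, (xstar.1 + xstar.2) / 2) ∈ S := by
    convert hmid using 1
    simp [Prod.ext_iff]
    constructor <;> ring
  have hkey := hmax ((xstar.1 + xstar.2) / 2, (xstar.1 + xstar.2) / 2)
    ⟨hmid', ⟨by dsimp; linarith, by dsimp; linarith⟩⟩
  dsimp at hkey
  nlinarith [sq_nonneg (xstar.1 - xstar.2)]
end

section
/- There exist nonempty compact convex sets S ⊆ S' ⊆ ℝ², both comprehensive relative to 0 (whenever y is in the set and 0 ≤ x ≤ y componentwise, x is in the set) and both containing a point with both coordinates strictly positive, such that the unique maximizer x* of the Nash product x₁·x₂ over {x ∈ S : x ≥ 0} and the unique maximizer y* of x₁·x₂ over {x ∈ S' : x ≥ 0} satisfy y*₂ < x*₂. (The Nash bargaining solution is not monotone: expanding the feasible set can strictly hurt one player.) -/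
/-- The Nash bargaining solution is not monotone: expanding the feasible set from
`S` to `S' ⊇ S` can strictly decrease player 2's reward at the Nash solution. -/
theorem nash_bargaining_not_monotone :
    ∃ S S' : Set (ℝ × ℝ), S ⊆ S' ∧ BargainingSet S ∧ BargainingSet S' ∧
      ∀ xstar ystar : ℝ × ℝ,
        (xstar ∈ {x ∈ S | 0 ≤ x.1 ∧ 0 ≤ x.2} ∧
          ∀ y ∈ {x ∈ S | 0 ≤ x.1 ∧ 0 ≤ x.2}, y.1 * y.2 ≤ xstar.1 * xstar.2) →
        (ystar ∈ {x ∈ S' | 0 ≤ x.1 ∧ 0 ≤ x.2} ∧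
          ∀ y ∈ {x ∈ S' | 0 ≤ x.1 ∧ 0 ≤ x.2}, y.1 * y.2 ≤ ystar.1 * ystar.2) →
        ystar.2 < xstar.2 := by
  refine ⟨{x : ℝ × ℝ | 0 ≤ x.1 ∧ 0 ≤ x.2 ∧ x.1 ≤ 1 ∧ x.2 ≤ 1},
    {x : ℝ × ℝ | 0 ≤ x.1 ∧ 0 ≤ x.2 ∧ x.2 ≤ 1 ∧ x.1 + 2 * x.2 ≤ 3}, ?_, ?_, ?_, ?_⟩
  · intro x hx
    simp only [Set.mem_setOf_eq] at hx ⊢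
    exact ⟨hx.1, hx.2.1, hx.2.2.2, by linarith [hx.2.2.1, hx.2.2.2]⟩
  · refine ⟨⟨(0, 0), by norm_num⟩, ?_, ?_, ?_, ⟨(1, 1), by norm_num, by norm_num, by norm_num⟩⟩
    · have h : {x : ℝ × ℝ | 0 ≤ x.1 ∧ 0 ≤ x.2 ∧ x.1 ≤ 1 ∧ x.2 ≤ 1}
          = Set.Icc ((0 : ℝ), (0 : ℝ)) (1, 1) := by
        ext x
        simp [Set.mem_Icc, Prod.le_def]
        tauto
      rw [h]; exact isCompact_Icc
    · intro x hx y hy a b ha hb hab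
      simp only [Set.mem_setOf_eq] at hx hy ⊢
      constructor
      · exact add_nonneg (mul_nonneg ha hx.1) (mul_nonneg hb hy.1)
      refine ⟨add_nonneg (mul_nonneg ha hx.2.1) (mul_nonneg hb hy.2.1), ?_, ?_⟩
      · calc a * x.1 + b * y.1 ≤ a * 1 + b * 1 := by
              gcongr; exacts [hx.2.2.1, hy.2.2.1]
          _ = 1 := by linarith
      · calc a * x.2 + b * y.2 ≤ a * 1 + b * 1 := by
              gcongr; exacts [hx.2.2.2, hy.2.2.2]
          _ = 1 := by linarith
    · intro y hy x hx1 hx2 hle1 hle2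
      simp only [Set.mem_setOf_eq] at hy ⊢
      exact ⟨hx1, hx2, le_trans hle1 hy.2.2.1, le_trans hle2 hy.2.2.2⟩
  · refine ⟨⟨(0, 0), by norm_num⟩, ?_, ?_, ?_, ⟨(1, 1), by norm_num, by norm_num, by norm_num⟩⟩
    · apply IsCompact.of_isClosed_subset (isCompact_Icc (a := ((0 : ℝ), (0 : ℝ))) (b := (3, 1)))
      · have h : {x : ℝ × ℝ | 0 ≤ x.1 ∧ 0 ≤ x.2 ∧ x.2 ≤ 1 ∧ x.1 + 2 * x.2 ≤ 3}
            = {x : ℝ × ℝ | 0 ≤ x.1} ∩ {x | 0 ≤ x.2} ∩ {x | x.2 ≤ 1}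
              ∩ {x | x.1 + 2 * x.2 ≤ 3} := by
          ext x; simp [Set.mem_setOf_eq]; tauto
        rw [h]
        refine IsClosed.inter (IsClosed.inter (IsClosed.inter ?_ ?_) ?_) ?_
        · exact isClosed_le continuous_const continuous_fst
        · exact isClosed_le continuous_const continuous_snd
        · exact isClosed_le continuous_snd continuous_const
        · exact isClosed_le (by fun_prop) continuous_const
      · intro x hx
        simp only [Set.mem_setOf_eq] at hx
        simp [Set.mem_Icc, Prod.le_def]
        refine ⟨⟨hx.1, hx.2.1⟩, by linarith [hx.2.1, hx.2.2.2], hx.2.2.1⟩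
    · intro x hx y hy a b ha hb hab
      simp only [Set.mem_setOf_eq] at hx hy ⊢
      refine ⟨add_nonneg (mul_nonneg ha hx.1) (mul_nonneg hb hy.1),
        add_nonneg (mul_nonneg ha hx.2.1) (mul_nonneg hb hy.2.1), ?_, ?_⟩
      · calc a * x.2 + b * y.2 ≤ a * 1 + b * 1 := by
              gcongr; exacts [hx.2.2.1, hy.2.2.1]
          _ = 1 := by linarith
      · have h1 := hx.2.2.2
        have h2 := hy.2.2.2
        simp only [Prod.fst_add, Prod.snd_add, Prod.smul_fst, Prod.smul_snd, smul_eq_mul]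
        nlinarith
    · intro y hy x hx1 hx2 hle1 hle2
      simp only [Set.mem_setOf_eq] at hy ⊢
      exact ⟨hx1, hx2, le_trans hle2 hy.2.2.1, by nlinarith [hy.2.2.2]⟩
  · rintro xstar ystar ⟨hxmem, hxmax⟩ ⟨hymem, hymax⟩
    simp only [Set.mem_setOf_eq] at hxmem hymem
    have hx1 : (1 : ℝ) * 1 ≤ xstar.1 * xstar.2 := by
      apply hxmax (1, 1)
      simp [Set.mem_setOf_eq]
    have hy1 : (3 / 2 : ℝ) * (3 / 4) ≤ ystar.1 * ystar.2 := by
      apply hymax (3 / 2, 3 / 4)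
      simp [Set.mem_setOf_eq]
      norm_num
    have hxS := hxmem.1
    have hyS := hymem.1
    -- xstar.2 ≥ 1
    have hx2 : 1 ≤ xstar.2 := by nlinarith [hxS.2.2.1, hxS.2.2.2, hxmem.2.1]
    -- ystar.2 = 3/4, in particular < 1
    have hy2 : ystar.2 < 1 := by
      nlinarith [hyS.2.2.2, hymem.2.2, sq_nonneg (ystar.2 - 3 / 4)]
    linarith
end
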